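/- arXiv:1512.05444 — 3 statements merged into one kernel-verified Lean document; each statement's English description precedes it below -/
import Mathlib

section
/- Let z_1,…,z_n ∈ 𝔻 and B(z) = ∏_{j=1}^n (z − z_j)/(1 − conj(z_j)·z). Set B_1 = 1 and, for 2 ≤ k ≤ n, B_k(z) = ∏_{j=1}^{k−1} (z − z_j)/(1 − conj(z_j)·z). Then for every z ∈ ℂ with |z| ≠ 1 that is not a pole of B (i.e., z ≠ 1/conj(z_j) for all j), one has (1 − |B(z)|²)/(1 − |z|²) = Σ_{k=1}^n |B_k(z)|² · (1 − |z_k|²)/|1 − conj(z_k)·z|². -/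
open Complex ComplexConjugate

/-! Each Blaschke factor `b_k(w) = (w - z_k)/(1 - conj z_k w)` satisfies
`1 - |b_k(w)|² = (1 - |z_k|²)(1 - |w|²)/|1 - conj z_k w|²`, and `1 - ∏ₖ |b_k|²` telescopes to
`∑ₖ (∏_{j<k} |b_j|²)(1 - |b_k|²)`. -/

theorem Finset.one_sub_prod_eq_sum_prod_lt_mul {R ι : Type*} [CommRing R] [LinearOrder ι]
    (s : Finset ι) (f : ι → R) :
    1 - ∏ i ∈ s, f i = ∑ i ∈ s, (∏ j ∈ s with j < i, f j) * (1 - f i) := by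
  have h := Finset.prod_one_sub_ordered s (fun i => 1 - f i)
  simp only [sub_sub_cancel] at h
  rw [h, sub_sub_cancel]
  exact Finset.sum_congr rfl fun i _ => mul_comm _ _

theorem Complex.norm_sq_one_sub_conj_mul_sub_norm_sq_sub (a w : ℂ) :
    ‖1 - conj a * w‖ ^ 2 - ‖w - a‖ ^ 2 = (1 - ‖a‖ ^ 2) * (1 - ‖w‖ ^ 2) := by
  simp only [Complex.sq_norm, Complex.normSq_apply, Complex.sub_re, Complex.sub_im,
    Complex.mul_re, Complex.mul_im, Complex.one_re, Complex.one_im,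
    Complex.conj_re, Complex.conj_im]
  ring

theorem Complex.one_sub_norm_sq_blaschke_factor {a w : ℂ} (h : 1 - conj a * w ≠ 0) :
    1 - ‖(w - a) / (1 - conj a * w)‖ ^ 2 =
      (1 - ‖a‖ ^ 2) * (1 - ‖w‖ ^ 2) / ‖1 - conj a * w‖ ^ 2 := by
  have hd : ‖1 - conj a * w‖ ^ 2 ≠ 0 := pow_ne_zero 2 (norm_ne_zero_iff.mpr h)
  rw [← norm_sq_one_sub_conj_mul_sub_norm_sq_sub, norm_div, div_pow, sub_div, div_self hd]

theorem blaschke_modulus_identity_general (n : ℕ) (z : Fin n → ℂ)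
    (B : ℂ → ℂ) (hB : ∀ w, B w = ∏ j, (w - z j) / (1 - conj (z j) * w))
    (Bk : Fin n → ℂ → ℂ)
    (hBk : ∀ k w, Bk k w =
      ∏ j ∈ Finset.univ.filter (fun j : Fin n => (j : ℕ) < (k : ℕ)),
        (w - z j) / (1 - conj (z j) * w))
    (w : ℂ) (hw : ‖w‖ ≠ 1) (hpole : ∀ j, 1 - conj (z j) * w ≠ 0) :
    (1 - ‖B w‖ ^ 2) / (1 - ‖w‖ ^ 2) =
      ∑ k, ‖Bk k w‖ ^ 2 *
        ((1 - ‖z k‖ ^ 2) / ‖1 - conj (z k) * w‖ ^ 2) := by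
  have hw2 : 1 - ‖w‖ ^ 2 ≠ 0 := by
    rw [sub_ne_zero, ne_comm, ne_eq, pow_eq_one_iff_of_nonneg (norm_nonneg w) two_ne_zero]
    exact hw
  rw [div_eq_iff hw2, Finset.sum_mul]
  simp only [hB, hBk, norm_prod, ← Finset.prod_pow, Finset.one_sub_prod_eq_sum_prod_lt_mul,
    Complex.one_sub_norm_sq_blaschke_factor (hpole _), Fin.lt_def]
  exact Finset.sum_congr rfl fun k _ => by ring

/-- Let `z₁, …, zₙ ∈ 𝔻` and `B(z) = ∏_{j=1}^n (z − z_j)/(1 − conj(z_j) z)`.  With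
`B₁ = 1` and `B_k(z) = ∏_{j=1}^{k−1} (z − z_j)/(1 − conj(z_j) z)` for `2 ≤ k ≤ n`
(here indexed by `k : Fin n`, so `B_k` is the product over `j < k`), for every `z ∈ ℂ`
with `|z| ≠ 1` that is not a pole of `B` we have
`(1 − |B(z)|²)/(1 − |z|²) = Σ_{k=1}^n |B_k(z)|² (1 − |z_k|²)/|1 − conj(z_k) z|²`. -/
theorem blaschke_modulus_identity (n : ℕ) (z : Fin n → ℂ)
    (hz : ∀ j, ‖z j‖ < 1)
    (B : ℂ → ℂ) (hB : ∀ w, B w = ∏ j, (w - z j) / (1 - conj (z j) * w))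
    (Bk : Fin n → ℂ → ℂ)
    (hBk : ∀ k w, Bk k w =
      ∏ j ∈ Finset.univ.filter (fun j : Fin n => (j : ℕ) < (k : ℕ)),
        (w - z j) / (1 - conj (z j) * w))
    (w : ℂ) (hw : ‖w‖ ≠ 1) (hpole : ∀ j, 1 - conj (z j) * w ≠ 0) :
    (1 - ‖B w‖ ^ 2) / (1 - ‖w‖ ^ 2) =
      ∑ k, ‖Bk k w‖ ^ 2 *
        ((1 - ‖z k‖ ^ 2) / ‖1 - conj (z k) * w‖ ^ 2) :=
  blaschke_modulus_identity_general n z B hB Bk hBk w hw hpole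
end

section
/- (Fatou) Let f be analytic on the open unit disk 𝔻 and suppose |f(z)| → 1 uniformly as |z| → 1, i.e., for every ε > 0 there exists r ∈ (0,1) such that ||f(z)| − 1| < ε whenever r < |z| < 1. Then f agrees on 𝔻 with a finite Blaschke product: there exist α ∈ ℝ, n ∈ ℕ, and z_1,…,z_n ∈ 𝔻 such that f(z) = e^{iα} ∏_{k=1}^n (z_k − z)/(1 − conj(z_k)·z) for all z ∈ 𝔻. -/
/-!
By the maximum principle, a function holomorphic on the disk with `|f| → 1` at the boundary
satisfies `|f| ≤ 1`; if it has no zeros, the same applies to `1 / f`, so `|f| ≡ 1` and `f` is a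
unimodular constant. In general the zeros of `f` stay away from the boundary, so there are finitely
many of them, each of finite order. Dividing `f` by the Blaschke factor of one of its zeros keeps it
holomorphic, keeps `|f| → 1` (a Blaschke factor has modulus tending to `1` uniformly at the
boundary) and lowers the total multiplicity of the zeros by one; induct on that multiplicity.
-/

open Complex ComplexConjugate Metric Set Filter Topology

/-- `z → ∂𝔻` from inside: `Tendsto (‖f ·‖) diskBoundary (𝓝 1)` says `|f z| → 1` uniformly
as `|z| → 1`. -/
noncomputable def diskBoundary : Filter ℂ := comap (‖·‖) (𝓝[<] 1)

theorem hasBasis_diskBoundary :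
    diskBoundary.HasBasis (· < 1) fun r => {z : ℂ | ‖z‖ ∈ Ioo r 1} :=
  (nhdsLT_basis 1).comap _

instance diskBoundary_neBot : diskBoundary.NeBot :=
  NeBot.comap_of_range_mem inferInstance <| mem_of_superset (Ioo_mem_nhdsLT zero_lt_one)
    fun r hr => ⟨(r : ℂ), by simpa using hr.1.le⟩

theorem tendsto_norm_diskBoundary : Tendsto (‖·‖) diskBoundary (𝓝 (1 : ℝ)) :=
  tendsto_comap.mono_right nhdsWithin_le_nhds

theorem eventually_diskBoundary_norm_lt_one : ∀ᶠ z in diskBoundary, ‖z‖ < 1 :=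
  tendsto_comap.eventually (eventually_nhdsWithin_of_forall fun _ h => h)

theorem tendsto_diskBoundary_of_forall {u : ℂ → ℝ} {c : ℝ}
    (h : ∀ ε > 0, ∃ r < 1, ∀ z : ℂ, r < ‖z‖ → ‖z‖ < 1 → |u z - c| < ε) :
    Tendsto u diskBoundary (𝓝 c) :=
  hasBasis_diskBoundary.tendsto_iff Metric.nhds_basis_ball |>.mpr fun ε hε =>
    let ⟨r, hr, hu⟩ := h ε hε
    ⟨r, hr, fun z hz => hu z hz.1 hz.2⟩

noncomputable def blaschkeFactor (a z : ℂ) : ℂ := (a - z) / (1 - conj a * z)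

section BlaschkeFactor

variable {a z : ℂ}

theorem one_sub_norm_le_norm_one_sub_conj_mul (hz : ‖z‖ ≤ 1) :
    1 - ‖a‖ ≤ ‖1 - conj a * z‖ :=
  calc 1 - ‖a‖ ≤ 1 - ‖conj a * z‖ := by
        rw [norm_mul, norm_conj]
        nlinarith [norm_nonneg a]
    _ ≤ ‖1 - conj a * z‖ := by simpa using norm_sub_norm_le (1 : ℂ) (conj a * z)

theorem norm_one_sub_conj_mul_pos (ha : ‖a‖ < 1) (hz : ‖z‖ ≤ 1) :
    0 < ‖1 - conj a * z‖ :=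
  (sub_pos.mpr ha).trans_le (one_sub_norm_le_norm_one_sub_conj_mul hz)

theorem one_sub_conj_mul_ne_zero (ha : ‖a‖ < 1) (hz : ‖z‖ ≤ 1) : 1 - conj a * z ≠ 0 :=
  norm_pos_iff.mp (norm_one_sub_conj_mul_pos ha hz)

theorem sq_norm_one_sub_conj_mul_sub_sq_norm_sub (a z : ℂ) :
    ‖1 - conj a * z‖ ^ 2 - ‖a - z‖ ^ 2 = (1 - ‖a‖ ^ 2) * (1 - ‖z‖ ^ 2) := by
  apply ofReal_injective
  push_cast
  simp only [← mul_conj', map_sub, map_mul, map_one, conj_conj]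
  ring

theorem norm_blaschkeFactor_le_one (ha : ‖a‖ < 1) (hz : ‖z‖ ≤ 1) :
    ‖blaschkeFactor a z‖ ≤ 1 := by
  have hD := norm_one_sub_conj_mul_pos ha hz
  have hid := sq_norm_one_sub_conj_mul_sub_sq_norm_sub a z
  have hnum : 0 ≤ (1 - ‖a‖ ^ 2) * (1 - ‖z‖ ^ 2) :=
    mul_nonneg (sub_nonneg.mpr (pow_le_one₀ (norm_nonneg a) ha.le))
      (sub_nonneg.mpr (pow_le_one₀ (norm_nonneg z) hz))
  have hsq : ‖a - z‖ ^ 2 ≤ ‖1 - conj a * z‖ ^ 2 := by linarith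
  rw [blaschkeFactor, norm_div, div_le_one hD]
  exact (pow_le_pow_iff_left₀ (norm_nonneg _) hD.le two_ne_zero).mp hsq

theorem one_sub_norm_blaschkeFactor_le (ha : ‖a‖ < 1) (hz : ‖z‖ ≤ 1) :
    1 - ‖blaschkeFactor a z‖ ≤ (1 + ‖a‖) / (1 - ‖a‖) * (1 - ‖z‖ ^ 2) := by
  have hD := norm_one_sub_conj_mul_pos ha hz
  have hB := norm_blaschkeFactor_le_one ha hz
  calc 1 - ‖blaschkeFactor a z‖ ≤ 1 - ‖blaschkeFactor a z‖ ^ 2 := by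
        nlinarith [norm_nonneg (blaschkeFactor a z)]
    _ = (1 - ‖a‖ ^ 2) * (1 - ‖z‖ ^ 2) / ‖1 - conj a * z‖ ^ 2 := by
        rw [← sq_norm_one_sub_conj_mul_sub_sq_norm_sub, blaschkeFactor, norm_div, div_pow,
          sub_div, div_self (pow_ne_zero 2 hD.ne')]
    _ ≤ (1 - ‖a‖ ^ 2) * (1 - ‖z‖ ^ 2) / (1 - ‖a‖) ^ 2 := by
        have hnum : 0 ≤ (1 - ‖a‖ ^ 2) * (1 - ‖z‖ ^ 2) :=
          mul_nonneg (sub_nonneg.mpr (pow_le_one₀ (norm_nonneg a) ha.le))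
            (sub_nonneg.mpr (pow_le_one₀ (norm_nonneg z) hz))
        gcongr
        exact one_sub_norm_le_norm_one_sub_conj_mul hz
    _ = (1 + ‖a‖) / (1 - ‖a‖) * (1 - ‖z‖ ^ 2) := by
        have hA : 1 - ‖a‖ ≠ 0 := (sub_pos.mpr ha).ne'
        field_simp
        ring

theorem tendsto_norm_blaschkeFactor (ha : ‖a‖ < 1) :
    Tendsto (fun z => ‖blaschkeFactor a z‖) diskBoundary (𝓝 1) := by
  have hlower : Tendsto (fun z : ℂ => 1 - (1 + ‖a‖) / (1 - ‖a‖) * (1 - ‖z‖ ^ 2))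
      diskBoundary (𝓝 1) := by
    simpa using ((tendsto_norm_diskBoundary.pow 2).const_sub 1).const_mul
      ((1 + ‖a‖) / (1 - ‖a‖)) |>.const_sub 1
  refine tendsto_of_tendsto_of_tendsto_of_le_of_le' hlower tendsto_const_nhds ?_ ?_ <;>
    filter_upwards [eventually_diskBoundary_norm_lt_one] with z hz
  · linarith [one_sub_norm_blaschkeFactor_le ha hz.le]
  · exact norm_blaschkeFactor_le_one ha hz.le

end BlaschkeFactor

section MaximumPrinciple

variable {E : Type*} [NormedAddCommGroup E] [NormedSpace ℂ E] {f : ℂ → E}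

theorem norm_le_of_eventually_diskBoundary_norm_le (hf : DifferentiableOn ℂ f (ball 0 1))
    {C : ℝ} (hC : ∀ᶠ z in diskBoundary, ‖f z‖ ≤ C) {w : ℂ} (hw : w ∈ ball (0 : ℂ) 1) :
    ‖f w‖ ≤ C := by
  obtain ⟨r, hr, hrC⟩ := hasBasis_diskBoundary.eventually_iff.mp hC
  rw [mem_ball_zero_iff] at hw
  obtain ⟨ρ, hrρ, hρ1⟩ := exists_between (max_lt hr hw)
  have hρ0 : ρ ≠ 0 := (lt_of_le_of_lt (le_max_right r _) hrρ |>.trans_le' (norm_nonneg w)).ne'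
  refine Complex.norm_le_of_forall_mem_frontier_norm_le isBounded_ball
    (hf.diffContOnCl_ball (closedBall_subset_ball hρ1)) (fun z hz => hrC ?_)
    (subset_closure (mem_ball_zero_iff.mpr ((le_max_right r _).trans_lt hrρ)))
  rw [frontier_ball 0 hρ0, mem_sphere_zero_iff_norm] at hz
  exact ⟨hz ▸ (le_max_left r _).trans_lt hrρ, hz ▸ hρ1⟩

theorem norm_le_of_tendsto_diskBoundary (hf : DifferentiableOn ℂ f (ball 0 1)) {c : ℝ}
    (hlim : Tendsto (fun z => ‖f z‖) diskBoundary (𝓝 c)) {w : ℂ} (hw : w ∈ ball (0 : ℂ) 1) :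
    ‖f w‖ ≤ c :=
  le_of_forall_pos_lt_add fun ε hε =>
    (norm_le_of_eventually_diskBoundary_norm_le hf
      ((hlim.eventually (gt_mem_nhds (lt_add_of_pos_right c (half_pos hε)))).mono
        fun _ => le_of_lt) hw).trans_lt
      (by linarith)

end MaximumPrinciple

theorem exists_eqOn_exp_mul_I_of_forall_ne_zero {f : ℂ → ℂ} (hf : DifferentiableOn ℂ f (ball 0 1))
    (hlim : Tendsto (fun z => ‖f z‖) diskBoundary (𝓝 1))
    (hzero : ∀ z ∈ ball (0 : ℂ) 1, f z ≠ 0) :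
    ∃ α : ℝ, EqOn f (fun _ => exp (α * I)) (ball 0 1) := by
  have hinv : Tendsto (fun z => ‖(f z)⁻¹‖) diskBoundary (𝓝 1) := by
    simpa using hlim.inv₀ one_ne_zero
  have hnorm : ∀ z ∈ ball (0 : ℂ) 1, ‖f z‖ = 1 := fun z hz => by
    have := norm_le_of_tendsto_diskBoundary (hf.inv hzero) hinv hz
    rw [Pi.inv_apply, norm_inv] at this
    exact le_antisymm (norm_le_of_tendsto_diskBoundary hf hlim hz)
      ((inv_le_one₀ (norm_pos_iff.mpr (hzero z hz))).mp this)
  have h0 : (0 : ℂ) ∈ ball (0 : ℂ) 1 := mem_ball_self one_pos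
  have hconst := Complex.eq_const_of_exists_max hf h0 fun z hz => by
    simp [hnorm z hz, hnorm 0 h0]
  refine ⟨arg (f 0), fun z hz => (hconst hz).trans ?_⟩
  simpa [hnorm 0 h0] using (norm_mul_exp_arg_mul_I (f 0)).symm

section Zeros

variable {f : ℂ → ℂ}

theorem eventually_diskBoundary_ne_zero (hlim : Tendsto (fun z => ‖f z‖) diskBoundary (𝓝 1)) :
    ∀ᶠ z in diskBoundary, f z ≠ 0 :=
  (hlim.eventually_ne one_ne_zero).mono fun _ h => norm_ne_zero_iff.mp h

theorem exists_mem_ball_ne_zero (hlim : Tendsto (fun z => ‖f z‖) diskBoundary (𝓝 1)) :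
    ∃ z ∈ ball (0 : ℂ) 1, f z ≠ 0 :=
  ((eventually_diskBoundary_ne_zero hlim).and eventually_diskBoundary_norm_lt_one).exists.imp
    fun _ h => ⟨mem_ball_zero_iff.mpr h.2, h.1⟩

theorem analyticOrderAt_ne_top_of_tendsto_diskBoundary (hf : DifferentiableOn ℂ f (ball 0 1))
    (hlim : Tendsto (fun z => ‖f z‖) diskBoundary (𝓝 1)) {z : ℂ} (hz : z ∈ ball (0 : ℂ) 1) :
    analyticOrderAt f z ≠ ⊤ := by
  obtain ⟨w, hw, hfw⟩ := exists_mem_ball_ne_zero hlim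
  refine (hf.analyticOnNhd isOpen_ball).analyticOrderAt_ne_top_of_isPreconnected
    (convex_ball 0 1).isPreconnected hw hz ?_
  simp [analyticOrderAt_eq_zero.mpr (Or.inr hfw)]

theorem finite_setOf_mem_ball_eq_zero (hf : DifferentiableOn ℂ f (ball 0 1))
    (hlim : Tendsto (fun z => ‖f z‖) diskBoundary (𝓝 1)) :
    {z | z ∈ ball (0 : ℂ) 1 ∧ f z = 0}.Finite := by
  obtain ⟨r, hr, hrf⟩ := hasBasis_diskBoundary.eventually_iff.mp
    (eventually_diskBoundary_ne_zero hlim)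
  obtain ⟨w, hw, hfw⟩ := exists_mem_ball_ne_zero hlim
  have hcod : f ⁻¹' {0}ᶜ ∈ codiscreteWithin (closedBall 0 r) :=
    codiscreteWithin_mono (closedBall_subset_ball hr)
      ((hf.analyticOnNhd isOpen_ball).preimage_zero_mem_codiscreteWithin hfw hw
        (isConnected_ball one_pos))
  refine ((isCompact_closedBall 0 r).finite_sdiff_of_mem_codiscreteWithin hcod).subset ?_
  rintro z ⟨hz, hfz⟩
  refine ⟨mem_closedBall_zero_iff.mpr (not_lt.mp fun hrz => ?_), by simpa using hfz⟩
  exact hrf ⟨hrz, mem_ball_zero_iff.mp hz⟩ hfz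

end Zeros

/-- `f / blaschkeFactor a` for a zero `a` of `f`, with the removable singularity at `a` filled in
through `dslope`. -/
noncomputable def divBlaschkeFactor (f : ℂ → ℂ) (a z : ℂ) : ℂ := (conj a * z - 1) * dslope f a z

section DivBlaschkeFactor

variable {f : ℂ → ℂ} {a : ℂ}

theorem blaschkeFactor_mul_divBlaschkeFactor (hfa : f a = 0) {z : ℂ} (hz : 1 - conj a * z ≠ 0) :
    blaschkeFactor a z * divBlaschkeFactor f a z = f z := by
  have h := sub_smul_dslope f a z
  rw [hfa, sub_zero, smul_eq_mul] at h
  rw [blaschkeFactor, divBlaschkeFactor, ← h, div_mul_eq_mul_div, div_eq_iff hz]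
  ring

theorem differentiableOn_divBlaschkeFactor {U : Set ℂ} (hU : U ∈ 𝓝 a)
    (hf : DifferentiableOn ℂ f U) : DifferentiableOn ℂ (divBlaschkeFactor f a) U :=
  (((differentiableOn_const _).mul differentiableOn_id).sub (differentiableOn_const _)).mul
    ((differentiableOn_dslope hU).mpr hf)

theorem analyticOrderAt_eq_add_divBlaschkeFactor (hf : DifferentiableOn ℂ f (ball 0 1))
    (ha : a ∈ ball (0 : ℂ) 1) (hfa : f a = 0) {b : ℂ} (hb : b ∈ ball (0 : ℂ) 1) :
    analyticOrderAt f b =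
      analyticOrderAt (· - a) b + analyticOrderAt (divBlaschkeFactor f a) b := by
  have hslope : AnalyticAt ℂ (dslope f a) b :=
    ((differentiableOn_dslope (isOpen_ball.mem_nhds ha)).mpr hf).analyticOnNhd isOpen_ball b hb
  have hfactor : f = (· - a) * dslope f a :=
    funext fun z => by simpa [hfa] using (sub_smul_dslope f a z).symm
  have hunit : analyticOrderAt (fun z => conj a * z - 1) b = 0 := by
    refine analyticOrderAt_eq_zero.mpr (Or.inr (sub_ne_zero.mpr fun h => ?_))
    exact one_sub_conj_mul_ne_zero (mem_ball_zero_iff.mp ha) (mem_ball_zero_iff.mp hb).le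
      (sub_eq_zero.mpr h.symm)
  have hdiv : divBlaschkeFactor f a = (fun z => conj a * z - 1) * dslope f a := rfl
  rw [hdiv, analyticOrderAt_mul (by fun_prop) hslope, hunit, zero_add]
  conv_lhs => rw [hfactor]
  exact analyticOrderAt_mul (by fun_prop) hslope

theorem sum_analyticOrderNatAt_eq_add_one (hf : DifferentiableOn ℂ f (ball 0 1))
    (hfa : f a = 0) {S : Finset ℂ} (hS : ↑S ⊆ ball (0 : ℂ) 1) (haS : a ∈ S)
    (hfin : ∀ b ∈ S, analyticOrderAt f b ≠ ⊤) :
    ∑ b ∈ S, analyticOrderNatAt f b =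
      ∑ b ∈ S, analyticOrderNatAt (divBlaschkeFactor f a) b + 1 := by
  have hpt : ∀ b ∈ S, analyticOrderNatAt f b =
      (if b = a then 1 else 0) + analyticOrderNatAt (divBlaschkeFactor f a) b := by
    intro b hb
    have h := analyticOrderAt_eq_add_divBlaschkeFactor hf (hS haS) hfa (hS hb)
    have hid : analyticOrderAt (· - a) b = if b = a then 1 else 0 := by
      split_ifs with hba <;> simp [hba]
    rw [hid] at h
    have hg : analyticOrderAt (divBlaschkeFactor f a) b ≠ ⊤ :=
      (WithTop.add_ne_top.mp (h ▸ hfin b hb)).2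
    rw [analyticOrderNatAt, h, ENat.toNat_add (by split_ifs <;> simp) hg]
    split_ifs <;> rfl
  rw [Finset.sum_congr rfl hpt, Finset.sum_add_distrib, Finset.sum_ite_eq' S a, if_pos haS,
    add_comm]

end DivBlaschkeFactor

theorem tendsto_norm_of_blaschkeFactor_mul_eq {f g : ℂ → ℂ} {a : ℂ} {c : ℝ} (ha : ‖a‖ < 1)
    (hfg : ∀ z ∈ ball (0 : ℂ) 1, blaschkeFactor a z * g z = f z)
    (hlim : Tendsto (fun z => ‖f z‖) diskBoundary (𝓝 c)) :
    Tendsto (fun z => ‖g z‖) diskBoundary (𝓝 c) := by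
  have hev : ∀ᶠ z in diskBoundary, ‖f z‖ / ‖blaschkeFactor a z‖ = ‖g z‖ := by
    filter_upwards [hasBasis_diskBoundary.mem_of_mem ha] with z ⟨haz, hz⟩
    have hB : blaschkeFactor a z ≠ 0 :=
      div_ne_zero (sub_ne_zero.mpr fun h => haz.ne (h ▸ rfl)) (one_sub_conj_mul_ne_zero ha hz.le)
    rw [← hfg z (mem_ball_zero_iff.mpr hz), norm_mul,
      mul_div_cancel_left₀ _ (norm_ne_zero_iff.mpr hB)]
  simpa using (hlim.div (tendsto_norm_blaschkeFactor ha) one_ne_zero).congr' hev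

def IsFiniteBlaschkeOnDisk (f : ℂ → ℂ) : Prop :=
  ∃ (α : ℝ) (n : ℕ) (z : Fin n → ℂ), (∀ k, ‖z k‖ < 1) ∧
    ∀ w : ℂ, ‖w‖ < 1 → f w = exp (α * I) * ∏ k, blaschkeFactor (z k) w

theorem isFiniteBlaschkeOnDisk_of_eqOn_const {f : ℂ → ℂ} {α : ℝ}
    (h : EqOn f (fun _ => exp (α * I)) (ball 0 1)) : IsFiniteBlaschkeOnDisk f :=
  ⟨α, 0, Fin.elim0, fun k => k.elim0, fun w hw => by simpa using h (mem_ball_zero_iff.mpr hw)⟩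

theorem IsFiniteBlaschkeOnDisk.of_blaschkeFactor_mul_eq {f g : ℂ → ℂ} {a : ℂ}
    (hg : IsFiniteBlaschkeOnDisk g) (ha : ‖a‖ < 1)
    (hfg : ∀ z ∈ ball (0 : ℂ) 1, blaschkeFactor a z * g z = f z) : IsFiniteBlaschkeOnDisk f := by
  obtain ⟨α, n, zs, hzs, hrep⟩ := hg
  refine ⟨α, n + 1, Fin.cons a zs, Fin.cases ha hzs, fun w hw => ?_⟩
  rw [← hfg w (mem_ball_zero_iff.mpr hw), hrep w hw, Fin.prod_univ_succ]
  simp only [Fin.cons_zero, Fin.cons_succ]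
  ring

theorem isFiniteBlaschkeOnDisk_of_zeros_subset (S : Finset ℂ) (hS : ↑S ⊆ ball (0 : ℂ) 1)
    {f : ℂ → ℂ} (hf : DifferentiableOn ℂ f (ball 0 1))
    (hlim : Tendsto (fun z => ‖f z‖) diskBoundary (𝓝 1))
    (hzeros : ∀ z ∈ ball (0 : ℂ) 1, f z = 0 → z ∈ S) : IsFiniteBlaschkeOnDisk f := by
  induction hN : ∑ b ∈ S, analyticOrderNatAt f b using Nat.strong_induction_on generalizing f with
  | _ N ih =>
  by_cases hzero : ∃ a ∈ ball (0 : ℂ) 1, f a = 0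
  · obtain ⟨a, ha, hfa⟩ := hzero
    have hfg : ∀ z ∈ ball (0 : ℂ) 1, blaschkeFactor a z * divBlaschkeFactor f a z = f z :=
      fun z hz => blaschkeFactor_mul_divBlaschkeFactor hfa
        (one_sub_conj_mul_ne_zero (mem_ball_zero_iff.mp ha) (mem_ball_zero_iff.mp hz).le)
    have hsum := sum_analyticOrderNatAt_eq_add_one hf hfa hS (hzeros a ha hfa)
      fun b hb => analyticOrderAt_ne_top_of_tendsto_diskBoundary hf hlim (hS hb)
    refine IsFiniteBlaschkeOnDisk.of_blaschkeFactor_mul_eq ?_ (mem_ball_zero_iff.mp ha) hfg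
    refine ih _ (by omega) (differentiableOn_divBlaschkeFactor (isOpen_ball.mem_nhds ha) hf)
      (tendsto_norm_of_blaschkeFactor_mul_eq (mem_ball_zero_iff.mp ha) hfg hlim)
      (fun z hz hgz => hzeros z hz ?_) rfl
    rw [← hfg z hz, hgz, mul_zero]
  · push Not at hzero
    obtain ⟨α, hα⟩ := exists_eqOn_exp_mul_I_of_forall_ne_zero hf hlim hzero
    exact isFiniteBlaschkeOnDisk_of_eqOn_const hα

/-- **Fatou.**  If `f` is analytic on the open unit disk `𝔻` and `|f(z)| → 1`
uniformly as `|z| → 1`, then `f` agrees on `𝔻` with a finite Blaschke product: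
there are `α ∈ ℝ`, `n ∈ ℕ` and `z₁, …, zₙ ∈ 𝔻` with
`f(z) = e^{iα} ∏_{k=1}^n (z_k − z)/(1 − conj(z_k) z)` for all `z ∈ 𝔻`. -/
theorem fatou_finite_blaschke (f : ℂ → ℂ)
    (hf : DifferentiableOn ℂ f (Metric.ball (0 : ℂ) 1))
    (hlim : ∀ ε > (0 : ℝ), ∃ r : ℝ, 0 < r ∧ r < 1 ∧
      ∀ z : ℂ, r < ‖z‖ → ‖z‖ < 1 → |‖f z‖ - 1| < ε) :
    ∃ (α : ℝ) (n : ℕ) (z : Fin n → ℂ), (∀ k, ‖z k‖ < 1) ∧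
      ∀ w : ℂ, ‖w‖ < 1 →
        f w = Complex.exp (α * Complex.I) * ∏ k, (z k - w) / (1 - conj (z k) * w) := by
  have hlim' : Tendsto (fun z => ‖f z‖) diskBoundary (𝓝 1) :=
    tendsto_diskBoundary_of_forall fun ε hε =>
      let ⟨r, _, hr1, hr⟩ := hlim ε hε
      ⟨r, hr1, hr⟩
  have hfin := finite_setOf_mem_ball_eq_zero hf hlim'
  exact isFiniteBlaschkeOnDisk_of_zeros_subset hfin.toFinset
    (fun z hz => (hfin.mem_toFinset.mp hz).1) hf hlim'
    fun z hz hfz => hfin.mem_toFinset.mpr ⟨hz, hfz⟩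
end

section
/- (Fisher) Let f be continuous on the closed unit disk, analytic on 𝔻, with |f(z)| ≤ 1 for all |z| ≤ 1, and let ε > 0. Then there exist finitely many finite Blaschke products B_1,…,B_m and nonnegative reals λ_1,…,λ_m with λ_1 + ⋯ + λ_m = 1 such that sup_{|z| ≤ 1} |f(z) − Σ_{j=1}^m λ_j B_j(z)| < ε. -/
/-!
Approximate `f` uniformly by a polynomial `P` with `‖P‖ ≤ ρ < 1` on the closed disk (dilate `f`,
truncate its Taylor series, shrink by a scalar). For `n > deg P` let
`P*(z) = zⁿ · conj (P (1 / conj z))`; on the circle `|P*| = |P|`, so `|P*| ≤ ρ` on the disk.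
For unimodular `u` the numerator `N = P + u zⁿ` of `B_u = (P + u zⁿ) / (1 + u P*)` has conjugate
reciprocal `conj u + P*`, which does not vanish on the closed disk; hence all zeros of `N` lie in
`𝔻` and `B_u = N / (u N*)` is a finite Blaschke product. Finally
`B_u = P + (zⁿ - P P*) ∑ₖ (-P*)ᵏ uᵏ⁺¹`, and averaging over the `m`-th roots of unity `u` keeps
only the terms with `k ≡ -1 (mod m)`, which leaves `P + O(ρ^(m-1))`.
-/

open Complex ComplexConjugate

/-- `f` agrees on the closed unit disk with a finite Blaschke product (of some degree
`n ∈ ℕ`, the empty product, i.e. a unimodular constant, being allowed). -/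
def IsFiniteBlaschke (f : ℂ → ℂ) : Prop :=
  ∃ (n : ℕ) (α : ℝ) (z : Fin n → ℂ), (∀ k, ‖z k‖ < 1) ∧
    ∀ w : ℂ, ‖w‖ ≤ 1 →
      f w = Complex.exp (α * Complex.I) * ∏ k, (z k - w) / (1 - conj (z k) * w)

open Polynomial Finset Metric

section RootsOfUnity

variable {K : Type*} [Field K]

theorem IsPrimitiveRoot.sum_range_pow_pow {ζ : K} {m : ℕ} (hζ : IsPrimitiveRoot ζ m) (k : ℕ) :
    ∑ j ∈ range m, (ζ ^ j) ^ k = if m ∣ k then (m : K) else 0 := by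
  simp_rw [← pow_mul, mul_comm _ k, pow_mul]
  split_ifs with hk
  · simp [(hζ.pow_eq_one_iff_dvd k).2 hk]
  · rw [geom_sum_eq (mt (hζ.pow_eq_one_iff_dvd k).1 hk), ← pow_mul, mul_comm, pow_mul,
      hζ.pow_eq_one, one_pow, sub_self, zero_div]

theorem IsPrimitiveRoot.sum_sum_pow_mul_pow_succ {ζ : K} {m : ℕ} (hζ : IsPrimitiveRoot ζ m)
    (hm : 0 < m) (x : K) :
    ∑ j ∈ range m, ∑ k ∈ range m, x ^ k * (ζ ^ j) ^ (k + 1) = m * x ^ (m - 1) := by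
  rw [sum_comm]
  simp_rw [← mul_sum, hζ.sum_range_pow_pow]
  rw [sum_eq_single (m - 1)]
  · simp [Nat.sub_add_cancel hm, mul_comm]
  · intro k hk hkm
    rw [if_neg, mul_zero]
    exact fun hdvd => hkm (by have := Nat.le_of_dvd k.succ_pos hdvd; have := mem_range.1 hk; omega)
  · simp [hm]

theorem div_one_add_mul_eq_of_pow_eq_one {m : ℕ} {u h : K} (hu : u ^ m = 1)
    (hh : (-h) ^ m ≠ 1) (p w : K) :
    (p + u * w) / (1 + u * h)
      = p + (w - p * h) * (∑ k ∈ range m, (-h) ^ k * u ^ (k + 1)) / (1 - (-h) ^ m) := by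
  have hden : 1 - (-h) ^ m ≠ 0 := sub_ne_zero.2 hh.symm
  -- `1 / (1 + u * h)` is a geometric series truncated at the period `m` of `u`
  have hgeom : (1 + u * h) * ∑ k ∈ range m, (u * -h) ^ k = 1 - (-h) ^ m := by
    rw [show 1 + u * h = 1 - u * -h by ring, mul_neg_geom_sum, mul_pow, hu, one_mul]
  set S := ∑ k ∈ range m, (u * -h) ^ k
  have hne : 1 + u * h ≠ 0 := left_ne_zero_of_mul (hgeom ▸ hden)
  have hS : S ≠ 0 := right_ne_zero_of_mul (hgeom ▸ hden)
  have hsum : ∑ k ∈ range m, (-h) ^ k * u ^ (k + 1) = u * S := by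
    rw [mul_sum]
    exact sum_congr rfl fun k _ => by ring
  rw [hsum, ← hgeom]
  field_simp
  ring

theorem IsPrimitiveRoot.sum_div_one_add_mul {ζ : K} {m : ℕ} (hζ : IsPrimitiveRoot ζ m)
    (hm : 0 < m) {h : K} (hh : (-h) ^ m ≠ 1) (p w : K) :
    ∑ j ∈ range m, (p + ζ ^ j * w) / (1 + ζ ^ j * h)
      = m * (p + (w - p * h) * (-h) ^ (m - 1) / (1 - (-h) ^ m)) := by
  have hpow : ∀ j, (ζ ^ j) ^ m = 1 := fun j => by rw [← pow_mul, mul_comm, pow_mul,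
    hζ.pow_eq_one, one_pow]
  simp_rw [div_one_add_mul_eq_of_pow_eq_one (hpow _) hh, sum_add_distrib, mul_div_assoc,
    ← mul_sum, ← sum_div, hζ.sum_sum_pow_mul_pow_succ hm, sum_const, card_range, nsmul_eq_mul]
  ring

end RootsOfUnity

theorem IsPrimitiveRoot.norm_average_div_one_add_sub_le {K : Type*} [NormedField K] [CharZero K]
    {ζ : K} {m : ℕ} (hζ : IsPrimitiveRoot ζ m) (hm : 0 < m) {p w h : K} {ρ : ℝ} (hρ : ρ < 1)
    (hp : ‖p‖ ≤ 1) (hw : ‖w‖ ≤ 1) (hh : ‖h‖ ≤ ρ) :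
    ‖(m : K)⁻¹ * ∑ j ∈ range m, (p + ζ ^ j * w) / (1 + ζ ^ j * h) - p‖
      ≤ 2 * ρ ^ (m - 1) / (1 - ρ) := by
  have hρ0 : 0 ≤ ρ := (norm_nonneg h).trans hh
  have hpow : ‖(-h) ^ m‖ ≤ ρ := by
    rw [norm_pow, norm_neg]
    exact (pow_le_pow_left₀ (norm_nonneg h) hh m).trans (pow_le_of_le_one hρ0 hρ.le hm.ne')
  have hden : 1 - ρ ≤ ‖1 - (-h) ^ m‖ := by
    have := norm_sub_norm_le (1 : K) ((-h) ^ m)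
    rw [norm_one] at this
    linarith
  have hh1 : (-h) ^ m ≠ 1 := fun h1 => by rw [h1, norm_one] at hpow; linarith
  have hnum : ‖(w - p * h) * (-h) ^ (m - 1)‖ ≤ 2 * ρ ^ (m - 1) := by
    rw [norm_mul, norm_pow, norm_neg]
    gcongr
    calc ‖w - p * h‖ ≤ ‖w‖ + ‖p‖ * ‖h‖ := (norm_sub_le _ _).trans (by rw [norm_mul])
      _ ≤ 2 := by nlinarith [norm_nonneg p, norm_nonneg h]
  rw [hζ.sum_div_one_add_mul hm hh1, inv_mul_cancel_left₀ (Nat.cast_ne_zero.2 hm.ne'),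
    add_sub_cancel_left, norm_div]
  exact div_le_div₀ (by positivity) hnum (by linarith) hden

theorem Polynomial.reflect_prod_X_sub_C {R : Type*} [CommRing R] [Nontrivial R]
    (s : Multiset R) :
    reflect (Multiset.card s) (s.map fun a => X - C a).prod
      = (s.map fun a => 1 - C a * X).prod := by
  induction s using Multiset.induction_on with
  | empty => simp
  | cons a s ih =>
    rw [Multiset.card_cons, Multiset.map_cons, Multiset.prod_cons, add_comm,
      reflect_mul _ _ (natDegree_X_sub_C_le a) (natDegree_multiset_prod_X_sub_C_eq_card s).le, ih,
      reflect_sub, reflect_one_X, reflect_C, pow_one, Multiset.map_cons, Multiset.prod_cons]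

theorem Complex.norm_le_of_forall_norm_eq_le {F : Type*} [NormedAddCommGroup F]
    [NormedSpace ℂ F] {g : ℂ → F} (hg : Differentiable ℂ g) {r ρ : ℝ} (hr : 0 < r)
    (h : ∀ z : ℂ, ‖z‖ = r → ‖g z‖ ≤ ρ) {z : ℂ} (hz : ‖z‖ ≤ r) : ‖g z‖ ≤ ρ := by
  refine norm_le_of_forall_mem_frontier_norm_le (U := ball 0 r) isBounded_ball
    hg.diffContOnCl (fun w hw => h w ?_) ?_
  · rwa [frontier_ball 0 hr.ne', mem_sphere_zero_iff_norm] at hw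
  · rwa [closure_ball 0 hr.ne', mem_closedBall_zero_iff]

/-- The polynomial `P*` of the construction, taken with respect to the degree bound `n`. -/
noncomputable def conjReflect (n : ℕ) (P : ℂ[X]) : ℂ[X] := (P.map (starRingEnd ℂ)).reflect n

theorem eval_conjReflect {n : ℕ} {P : ℂ[X]} (hP : P.natDegree ≤ n) {z : ℂ} (hz : z ≠ 0) :
    (conjReflect n P).eval z = z ^ n * conj (P.eval (conj z)⁻¹) := by
  let _ := invertibleOfNonzero (inv_ne_zero hz)
  have h := eval₂_reflect_mul_pow (RingHom.id ℂ) z⁻¹ n (P.map (starRingEnd ℂ))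
    (natDegree_map_le.trans hP)
  rw [invOf_eq_inv, inv_inv, inv_pow, ← div_eq_mul_inv, div_eq_iff (pow_ne_zero n hz)] at h
  rw [conjReflect, eval, h, mul_comm, ← map_inv₀, ← eval, ← eval_map_apply, Complex.conj_conj]

theorem norm_eval_conjReflect_of_norm_eq_one {n : ℕ} {P : ℂ[X]} (hP : P.natDegree ≤ n) {z : ℂ}
    (hz : ‖z‖ = 1) : ‖(conjReflect n P).eval z‖ = ‖P.eval z‖ := by
  rw [eval_conjReflect hP (norm_ne_zero_iff.1 (hz.symm ▸ one_ne_zero)), ← inv_eq_conj hz,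
    inv_inv, norm_mul, norm_pow, hz, one_pow, one_mul, Complex.norm_conj]

theorem norm_eval_conjReflect_le {n : ℕ} {P : ℂ[X]} (hP : P.natDegree ≤ n) {ρ : ℝ}
    (hρ : ∀ z : ℂ, ‖z‖ ≤ 1 → ‖P.eval z‖ ≤ ρ) {z : ℂ} (hz : ‖z‖ ≤ 1) :
    ‖(conjReflect n P).eval z‖ ≤ ρ :=
  norm_le_of_forall_norm_eq_le (Polynomial.differentiable _) one_pos
    (fun w hw => (norm_eval_conjReflect_of_norm_eq_one hP hw).trans_le (hρ w hw.le)) hz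

theorem conjReflect_C_mul_X_pow_add (n : ℕ) (u : ℂ) (P : ℂ[X]) :
    conjReflect n (C u * X ^ n + P) = C (conj u) + conjReflect n P := by
  simp [conjReflect, reflect_add]

theorem conjReflect_natDegree_eq_prod (N : ℂ[X]) :
    conjReflect N.natDegree N
      = C (conj N.leadingCoeff) * (N.roots.map fun a => 1 - C (conj a) * X).prod := by
  have hfactor := C_leadingCoeff_mul_prod_multiset_X_sub_C
    (IsAlgClosed.card_roots_eq_natDegree (p := N))
  have h := reflect_prod_X_sub_C (N.roots.map conj)
  rw [Multiset.card_map, Multiset.map_map, Multiset.map_map,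
    IsAlgClosed.card_roots_eq_natDegree] at h
  rw [conjReflect]
  nth_rewrite 2 [← hfactor]
  simpa [Polynomial.map_multiset_prod, Multiset.map_map, reflect_C_mul] using Or.inl h

theorem norm_lt_one_of_mem_roots {n : ℕ} {N : ℂ[X]} (hN : N.natDegree ≤ n)
    (h : ∀ z : ℂ, ‖z‖ ≤ 1 → (conjReflect n N).eval z ≠ 0) {a : ℂ} (ha : a ∈ N.roots) :
    ‖a‖ < 1 := by
  by_contra! ha1
  have ha0 : a ≠ 0 := norm_pos_iff.1 (one_pos.trans_le ha1)
  refine h (conj a)⁻¹ ?_ ?_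
  · rw [norm_inv, Complex.norm_conj]
    exact inv_le_one_of_one_le₀ ha1
  · rw [eval_conjReflect hN (by simpa using ha0), map_inv₀, Complex.conj_conj, inv_inv,
      (mem_roots'.1 ha).2, map_zero, mul_zero]

theorem isFiniteBlaschke_of_multiset {c : ℂ} (hc : ‖c‖ = 1) {s : Multiset ℂ}
    (hs : ∀ a ∈ s, ‖a‖ < 1) {f : ℂ → ℂ}
    (hf : ∀ w : ℂ, ‖w‖ ≤ 1 → f w = c * (s.map fun a => (a - w) / (1 - conj a * w)).prod) :
    IsFiniteBlaschke f := by
  refine ⟨s.toList.length, arg c, fun i => s.toList[i.1],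
    fun i => hs _ (Multiset.mem_toList.1 (List.getElem_mem _)), fun w hw => ?_⟩
  have hexp : exp (arg c * I) = c := by simpa [hc] using norm_mul_exp_arg_mul_I c
  dsimp only
  rw [hf w hw, hexp, Fin.prod_univ_fun_getElem s.toList fun a => (a - w) / (1 - conj a * w),
    ← Multiset.prod_coe, ← Multiset.map_coe, Multiset.coe_toList]

theorem isFiniteBlaschke_div_conjReflect {N : ℂ[X]} (hN : ‖N.leadingCoeff‖ = 1)
    (hroots : ∀ a ∈ N.roots, ‖a‖ < 1) :
    IsFiniteBlaschke fun z => N.eval z / (N.leadingCoeff * (conjReflect N.natDegree N).eval z) := by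
  set u := N.leadingCoeff
  set s := N.roots
  have hfactor : C u * (s.map fun a => X - C a).prod = N :=
    C_leadingCoeff_mul_prod_multiset_X_sub_C IsAlgClosed.card_roots_eq_natDegree
  have hu : u * conj u = 1 := by rw [mul_conj', hN, ofReal_one, one_pow]
  refine isFiniteBlaschke_of_multiset (c := u * (-1) ^ Multiset.card s) (by simp [hN]) hroots
    fun w _ => ?_
  have hsign : (s.map fun a => w - a).prod
      = (-1) ^ Multiset.card s * (s.map fun a => a - w).prod := by
    rw [← Multiset.card_map (fun a => a - w) s, ← Multiset.prod_map_neg, Multiset.map_map]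
    simp
  rw [conjReflect_natDegree_eq_prod]
  nth_rewrite 1 [← hfactor]
  simp only [eval_mul, eval_C, eval_multiset_prod, Multiset.map_map, Function.comp_apply,
    eval_sub, eval_X, eval_one, Multiset.prod_map_div]
  rw [hsign, ← mul_assoc u (conj u), hu, one_mul]
  ring

theorem isFiniteBlaschke_div_one_add_conjReflect {n : ℕ} {P : ℂ[X]} (hP : P.natDegree < n)
    (hH : ∀ z : ℂ, ‖z‖ ≤ 1 → ‖(conjReflect n P).eval z‖ < 1) {u : ℂ} (hu : ‖u‖ = 1) :
    IsFiniteBlaschke fun z => (P.eval z + u * z ^ n) / (1 + u * (conjReflect n P).eval z) := by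
  set N := C u * X ^ n + P
  have hu0 : u ≠ 0 := norm_ne_zero_iff.1 (hu ▸ one_ne_zero)
  have hdeg : N.natDegree = n := by
    rw [natDegree_add_eq_left_of_natDegree_lt] <;> rw [natDegree_C_mul_X_pow n u hu0]
    exact hP
  have hlead : N.leadingCoeff = u := by
    rw [leadingCoeff, hdeg]
    simp [N, coeff_eq_zero_of_natDegree_lt hP]
  have hrefl : ∀ z, (conjReflect n N).eval z = conj u + (conjReflect n P).eval z := fun z => by
    rw [conjReflect_C_mul_X_pow_add, eval_add, eval_C]
  have hroots : ∀ a ∈ N.roots, ‖a‖ < 1 := by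
    refine fun a ha => norm_lt_one_of_mem_roots hdeg.le (fun z hz h0 => ?_) ha
    rw [hrefl, add_eq_zero_iff_eq_neg] at h0
    have := hH z hz
    rw [← norm_neg, ← h0, Complex.norm_conj, hu] at this
    exact this.false
  convert isFiniteBlaschke_div_conjReflect (hlead ▸ hu) hroots using 2 with z
  rw [hlead, hdeg, hrefl, mul_add, mul_conj', hu, ofReal_one, one_pow]
  simp [N, add_comm]

theorem exists_polynomial_approx_of_differentiableOn_ball {g : ℂ → ℂ} {r R : ℝ}
    (hg : DifferentiableOn ℂ g (ball 0 R)) (hr0 : 0 ≤ r) (hrR : r < R) {η : ℝ} (hη : 0 < η) :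
    ∃ Q : ℂ[X], ∀ z : ℂ, ‖z‖ ≤ r → ‖g z - Q.eval z‖ < η := by
  obtain ⟨r', hrr', hr'R⟩ := exists_between hrR
  obtain ⟨R', hr'R', hR'R⟩ := exists_between hr'R
  have hR' : (R'.toNNReal : ℝ) = R' := Real.coe_toNNReal _ (by linarith)
  have hps := (hg.mono (closedBall_subset_ball (hR'.symm ▸ hR'R))).hasFPowerSeriesOnBall
    (Real.toNNReal_pos.2 (by linarith))
  have htu := hps.tendstoUniformlyOn (r' := r'.toNNReal) (by
    rw [ENNReal.coe_lt_coe, Real.toNNReal_lt_toNNReal_iff] <;> linarith)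
  obtain ⟨N, hN⟩ := (tendstoUniformlyOn_iff.1 htu η hη).exists
  set q := cauchyPowerSeries g 0 R'.toNNReal
  refine ⟨∑ k ∈ range N, C (q.coeff k) * X ^ k, fun z hz => ?_⟩
  have heval : (∑ k ∈ range N, C (q.coeff k) * X ^ k).eval z = q.partialSum N z := by
    rw [eval_finsetSum, FormalMultilinearSeries.partialSum]
    refine sum_congr rfl fun k _ => ?_
    rw [FormalMultilinearSeries.apply_eq_pow_smul_coeff, smul_eq_mul, eval_mul, eval_C,
      eval_pow, eval_X, mul_comm]
  simpa [heval, dist_eq_norm] using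
    hN z (mem_ball_zero_iff.2 (by rw [Real.coe_toNNReal _ (by linarith)]; linarith))

theorem ContinuousOn.exists_norm_sub_comp_mul_lt {E : Type*} [NormedAddCommGroup E]
    {f : ℂ → E} (hf : ContinuousOn f (closedBall 0 1)) {η : ℝ} (hη : 0 < η) :
    ∃ r : ℝ, 0 < r ∧ r < 1 ∧ ∀ z : ℂ, ‖z‖ ≤ 1 → ‖f z - f (r * z)‖ < η := by
  obtain ⟨δ, hδ, hfδ⟩ := Metric.uniformContinuousOn_iff.1
    ((isCompact_closedBall 0 1).uniformContinuousOn_of_continuous hf) η hη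
  refine ⟨max (1 / 2) (1 - δ / 2), by positivity, max_lt (by norm_num) (by linarith),
    fun z hz => ?_⟩
  set r := max (1 / 2) (1 - δ / 2)
  have hr0 : 0 ≤ r := by positivity
  have hr1 : r ≤ 1 := max_le (by norm_num) (by linarith)
  have hrz : ‖(r : ℂ) * z‖ = r * ‖z‖ := by simp [abs_of_nonneg hr0]
  have hsub : ‖z - r * z‖ = (1 - r) * ‖z‖ := by
    rw [← one_sub_mul, norm_mul, ← ofReal_one, ← ofReal_sub, norm_real,
      Real.norm_of_nonneg (by linarith)]
  rw [← dist_eq_norm]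
  refine hfδ z (mem_closedBall_zero_iff.2 hz) _
    (mem_closedBall_zero_iff.2 (by rw [hrz]; nlinarith [norm_nonneg z])) ?_
  rw [dist_eq_norm, hsub]
  nlinarith [norm_nonneg z, le_max_right (1 / 2) (1 - δ / 2)]

theorem exists_polynomial_approx_of_continuousOn_closedBall {f : ℂ → ℂ}
    (hcont : ContinuousOn f (closedBall 0 1)) (hdiff : DifferentiableOn ℂ f (ball 0 1))
    {η : ℝ} (hη : 0 < η) : ∃ Q : ℂ[X], ∀ z : ℂ, ‖z‖ ≤ 1 → ‖f z - Q.eval z‖ < η := by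
  obtain ⟨r, hr0, hr1, hfr⟩ := hcont.exists_norm_sub_comp_mul_lt (half_pos hη)
  have hg : DifferentiableOn ℂ (fun z => f (r * z)) (ball 0 r⁻¹) := by
    refine hdiff.comp (differentiableOn_id.const_mul _) fun z hz => ?_
    rw [mem_ball_zero_iff] at hz ⊢
    rw [norm_mul, norm_real, Real.norm_of_nonneg hr0.le, ← mul_inv_cancel₀ hr0.ne']
    gcongr
  obtain ⟨Q, hQ⟩ := exists_polynomial_approx_of_differentiableOn_ball hg zero_le_one
    ((one_lt_inv₀ hr0).2 hr1) (half_pos hη)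
  refine ⟨Q, fun z hz => ?_⟩
  calc ‖f z - Q.eval z‖ ≤ ‖f z - f (r * z)‖ + ‖f (r * z) - Q.eval z‖ :=
        norm_sub_le_norm_sub_add_norm_sub _ _ _
    _ < η / 2 + η / 2 := add_lt_add (hfr z hz) (hQ z hz)
    _ = η := add_halves η

theorem exists_polynomial_approx_norm_le_lt_one {f : ℂ → ℂ}
    (hcont : ContinuousOn f (closedBall 0 1)) (hdiff : DifferentiableOn ℂ f (ball 0 1))
    (hbd : ∀ z : ℂ, ‖z‖ ≤ 1 → ‖f z‖ ≤ 1) {ε : ℝ} (hε : 0 < ε) :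
    ∃ (P : ℂ[X]) (ρ : ℝ), ρ < 1 ∧ (∀ z : ℂ, ‖z‖ ≤ 1 → ‖P.eval z‖ ≤ ρ) ∧
      ∀ z : ℂ, ‖z‖ ≤ 1 → ‖f z - P.eval z‖ < ε := by
  obtain ⟨δ, hδ0, hδ1, hδε⟩ : ∃ δ : ℝ, 0 < δ ∧ δ ≤ 1 ∧ 3 * δ ≤ ε :=
    ⟨min (ε / 3) 1, by positivity, min_le_right _ _, by linarith [min_le_left (ε / 3) 1]⟩
  obtain ⟨Q, hQ⟩ := exists_polynomial_approx_of_continuousOn_closedBall hcont hdiff hδ0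
  have hQ1 : ∀ z : ℂ, ‖z‖ ≤ 1 → ‖Q.eval z‖ ≤ 1 + δ := fun z hz =>
    (norm_le_norm_add_norm_sub' _ (f z)).trans
      (by rw [norm_sub_rev]; linarith [hbd z hz, hQ z hz])
  refine ⟨C ((1 - δ : ℝ) : ℂ) * Q, 1 - δ ^ 2, by nlinarith, fun z hz => ?_, fun z hz => ?_⟩
  · rw [eval_mul, eval_C, norm_mul, norm_real, Real.norm_of_nonneg (by linarith)]
    nlinarith [hQ1 z hz]
  · rw [eval_mul, eval_C]
    calc ‖f z - ((1 - δ : ℝ) : ℂ) * Q.eval z‖ = ‖(f z - Q.eval z) + (δ : ℂ) * Q.eval z‖ := by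
          push_cast; ring_nf
      _ ≤ ‖f z - Q.eval z‖ + δ * ‖Q.eval z‖ := by
          refine (norm_add_le _ _).trans_eq ?_
          rw [norm_mul, norm_real, Real.norm_of_nonneg hδ0.le]
      _ < δ + δ * (1 + δ) := add_lt_add_of_lt_of_le (hQ z hz) (by gcongr; exact hQ1 z hz)
      _ ≤ ε := by nlinarith

theorem exists_convex_blaschke_approx_of_polynomial {P : ℂ[X]} {ρ : ℝ} (hρ1 : ρ < 1)
    (hPρ : ∀ z : ℂ, ‖z‖ ≤ 1 → ‖P.eval z‖ ≤ ρ) {ε : ℝ} (hε : 0 < ε) :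
    ∃ (m : ℕ) (lam : Fin m → ℝ) (B : Fin m → ℂ → ℂ),
      (∀ j, 0 ≤ lam j) ∧ (∑ j, lam j = 1) ∧ (∀ j, IsFiniteBlaschke (B j)) ∧
      ∀ z : ℂ, ‖z‖ ≤ 1 → ‖P.eval z - ∑ j, (lam j : ℂ) * B j z‖ < ε := by
  set n := P.natDegree + 1
  set H := conjReflect n P
  have hH : ∀ z : ℂ, ‖z‖ ≤ 1 → ‖H.eval z‖ ≤ ρ := fun z hz =>
    norm_eval_conjReflect_le P.natDegree.le_succ hPρ hz
  obtain ⟨k, hk⟩ := exists_pow_lt_of_lt_one (by nlinarith : 0 < (1 - ρ) * ε / 2) hρ1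
  set ζ := exp (2 * Real.pi * I / (k + 1 : ℕ))
  have hζ : IsPrimitiveRoot ζ (k + 1) := isPrimitiveRoot_exp (k + 1) k.succ_ne_zero
  refine ⟨k + 1, fun _ => 1 / (k + 1 : ℕ), fun j z =>
      (P.eval z + ζ ^ (j : ℕ) * z ^ n) / (1 + ζ ^ (j : ℕ) * H.eval z), fun _ => by positivity,
    by rw [sum_const, card_univ, Fintype.card_fin, nsmul_eq_mul,
      mul_one_div_cancel (Nat.cast_ne_zero.2 k.succ_ne_zero)], fun j => ?_, fun z hz => ?_⟩
  · exact isFiniteBlaschke_div_one_add_conjReflect P.natDegree.lt_succ_self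
      (fun z hz => (hH z hz).trans_lt hρ1)
      (by rw [norm_pow, hζ.norm'_eq_one k.succ_ne_zero, one_pow])
  have havg := hζ.norm_average_div_one_add_sub_le (w := z ^ n) k.succ_pos hρ1
    ((hPρ z hz).trans hρ1.le) (by rw [norm_pow]; exact pow_le_one₀ (norm_nonneg z) hz) (hH z hz)
  rw [Nat.add_sub_cancel, ← Fin.sum_univ_eq_sum_range, mul_sum] at havg
  have hsmall : 2 * ρ ^ k / (1 - ρ) < ε := by
    rw [div_lt_iff₀ (by linarith)]
    linarith
  rw [norm_sub_rev]
  simpa using havg.trans_lt hsmall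

/-- **Fisher.**  Let `f` be continuous on the closed unit disk, analytic on `𝔻`, with
`|f| ≤ 1` on the closed disk, and let `ε > 0`.  Then there is a convex combination of
finitely many finite Blaschke products which is uniformly within `ε` of `f` on the
closed unit disk. -/
theorem fisher_convex_blaschke_approx (f : ℂ → ℂ)
    (hcont : ContinuousOn f (Metric.closedBall (0 : ℂ) 1))
    (hdiff : DifferentiableOn ℂ f (Metric.ball (0 : ℂ) 1))
    (hbd : ∀ z : ℂ, ‖z‖ ≤ 1 → ‖f z‖ ≤ 1)
    (ε : ℝ) (hε : 0 < ε) :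
    ∃ (m : ℕ) (lam : Fin m → ℝ) (B : Fin m → ℂ → ℂ),
      (∀ j, 0 ≤ lam j) ∧ (∑ j, lam j = 1) ∧ (∀ j, IsFiniteBlaschke (B j)) ∧
      ∀ z : ℂ, ‖z‖ ≤ 1 →
        ‖f z - ∑ j, (lam j : ℂ) * B j z‖ < ε := by
  obtain ⟨P, ρ, hρ1, hPρ, hfP⟩ :=
    exists_polynomial_approx_norm_le_lt_one hcont hdiff hbd (half_pos hε)
  obtain ⟨m, lam, B, hlam, hsum, hB, hPB⟩ :=
    exists_convex_blaschke_approx_of_polynomial hρ1 hPρ (half_pos hε)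
  refine ⟨m, lam, B, hlam, hsum, hB, fun z hz => ?_⟩
  calc _ ≤ ‖f z - P.eval z‖ + ‖P.eval z - ∑ j, (lam j : ℂ) * B j z‖ :=
        norm_sub_le_norm_sub_add_norm_sub _ _ _
    _ < ε / 2 + ε / 2 := add_lt_add (hfP z hz) (hPB z hz)
    _ = ε := add_halves ε
end
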